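/- There exists a pair of orthogonal 9-cycle decompositions of the complete tripartite graph K_{9,9,9}: two partitions of the edge set of K_{9,9,9} into cycles of length 9 such that any cycle of the first partition and any cycle of the second partition share at most one edge. -/

import Mathlib

/-!
Both decompositions are unions of orbits of base cycles under the translation `x ↦ x + 1` of the
indices within each part: three base cycles with orbits of length 9 for `D₂`, nine base cycles
with orbits of length 3 for `D₁`. Reading an edge from part `τ` to part `τ + 1`, the difference
of its indices is invariant under translation, and within each family the pair (type,
difference) lies on a single base cycle; this locates the cycle of the family through any edge.
With that labelling, being a decomposition and orthogonality (the nine edges of a cycle of `D₁`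
lie on nine distinct cycles of `D₂`) become checks that are linear in the number of edges.
-/

/-- A set of edges `C` forms a cycle of length `l`: there is a graph and a closed walk
which is a cycle, has length `l`, and whose edge set is exactly `C`. -/
def IsCycleEdgeSet {V : Type*} (l : ℕ) (C : Set (Sym2 V)) : Prop :=
  ∃ (G : SimpleGraph V) (x : V) (w : G.Walk x x),
    w.IsCycle ∧ w.length = l ∧ C = {e | e ∈ w.edges}

/-- `D` is a decomposition of the edge set of `G` into cycles of length `l`:
each member of `D` is the edge set of an `l`-cycle contained in `G`, and every
edge of `G` lies in exactly one member of `D`. -/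
def IsCycleDecomposition {V : Type*} (G : SimpleGraph V) (l : ℕ)
    (D : Set (Set (Sym2 V))) : Prop :=
  (∀ C ∈ D, IsCycleEdgeSet l C ∧ C ⊆ G.edgeSet) ∧
  (∀ e ∈ G.edgeSet, ∃! C, C ∈ D ∧ e ∈ C)

/-- Two cycle decompositions are orthogonal if any member of the first and any member
of the second share at most one edge. -/
def OrthogonalDecompositions {V : Type*} (D₁ D₂ : Set (Set (Sym2 V))) : Prop :=
  ∀ C₁ ∈ D₁, ∀ C₂ ∈ D₂, (C₁ ∩ C₂).Subsingleton

open SimpleGraph Function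

section CycleEdges

variable {V : Type*} {n : ℕ}

-- `i + 1` wraps around in `Fin n`, so this is a closed walk.
def cycleEdges [NeZero n] (c : Fin n → V) : Set (Sym2 V) :=
  Set.range fun i => s(c i, c (i + 1))

theorem cycleEdges_eq_coe_image [NeZero n] [DecidableEq V] (c : Fin n → V) :
    cycleEdges c = ↑(Finset.univ.image fun i => s(c i, c (i + 1))) := by
  simp [cycleEdges]

theorem SimpleGraph.cycleGraph_edgeSet_subset_cycleEdges :
    (cycleGraph (n + 2)).edgeSet ⊆ cycleEdges (id : Fin (n + 2) → Fin (n + 2)) := by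
  rintro ⟨a, b⟩ hab
  rcases cycleGraph_adj.mp hab with h | h
  · exact ⟨b, by simp [← sub_eq_iff_eq_add'.mp h, Sym2.eq_swap]⟩
  · exact ⟨a, by simp [← sub_eq_iff_eq_add'.mp h]⟩

/-- The cycle of `cycleGraph` runs through all its edges: it has as many distinct edges as
there are pairs `s(i, i + 1)`. -/
theorem SimpleGraph.cycleGraph.edges_cycle :
    {e | e ∈ (cycleGraph.cycle n).edges} = cycleEdges (id : Fin (n + 3) → Fin (n + 3)) := by
  classical
  set T := Finset.univ.image fun i : Fin (n + 3) => s(i, i + 1)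
  have hT : cycleEdges (id : Fin (n + 3) → Fin (n + 3)) = T := cycleEdges_eq_coe_image id
  have hsub : (cycleGraph.cycle n).edges.toFinset ⊆ T := fun e he => by
    rw [← Finset.mem_coe, ← hT]
    exact cycleGraph_edgeSet_subset_cycleEdges
      ((cycleGraph.cycle n).edges_subset_edgeSet (List.mem_toFinset.mp he))
  have hcard : T.card ≤ (cycleGraph.cycle n).edges.toFinset.card := by
    rw [List.toFinset_card_of_nodup cycleGraph.isCycle_cycle.edges_nodup, Walk.length_edges,
      cycleGraph.length_cycle]
    exact Finset.card_image_le.trans (by simp)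
  rw [hT, ← Finset.eq_of_subset_of_card_le hsub hcard]
  ext
  simp

theorem isCycleEdgeSet_cycleEdges (c : Fin (n + 3) → V) (hc : Injective c) :
    IsCycleEdgeSet (n + 3) (cycleEdges c) := by
  let f : cycleGraph (n + 3) →g ⊤ := ⟨c, fun h => hc.ne h.ne⟩
  refine ⟨⊤, c 0, (cycleGraph.cycle n).map f,
    (Walk.isCycle_map_iff_of_injective hc).mpr cycleGraph.isCycle_cycle, by simp, ?_⟩
  calc cycleEdges c = Sym2.map c '' cycleEdges (id : Fin (n + 3) → Fin (n + 3)) := by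
        simp only [cycleEdges, ← Set.range_comp]
        rfl
    _ = _ := by
        rw [← cycleGraph.edges_cycle]
        ext
        simp only [Set.mem_image, Set.mem_ofPred_eq, Walk.edges_map, List.mem_map]
        rfl

variable {ι κ : Type*}

theorem label_eq_of_mem_cycleEdges [NeZero n] {c : ι → Fin n → V} {label : V → V → ι}
    (hlabel : ∀ k i, label (c k i) (c k (i + 1)) = k ∧ label (c k (i + 1)) (c k i) = k)
    {a b : V} {k : ι} (h : s(a, b) ∈ cycleEdges (c k)) : label a b = k := by
  obtain ⟨i, hi⟩ := h
  rcases Sym2.eq_iff.mp hi with ⟨rfl, rfl⟩ | ⟨rfl, rfl⟩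
  exacts [(hlabel k i).1, (hlabel k i).2]

theorem isCycleDecomposition_range_of_label {G : SimpleGraph V} (c : ι → Fin (n + 3) → V)
    (label : V → V → ι) (hinj : ∀ k, Injective (c k))
    (hadj : ∀ k i, G.Adj (c k i) (c k (i + 1)))
    (hlabel : ∀ k i, label (c k i) (c k (i + 1)) = k ∧ label (c k (i + 1)) (c k i) = k)
    (hcover : ∀ a b, G.Adj a b → s(a, b) ∈ cycleEdges (c (label a b))) :
    IsCycleDecomposition G (n + 3) (Set.range fun k => cycleEdges (c k)) := by
  refine ⟨?_, fun e he => ?_⟩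
  · rintro _ ⟨k, rfl⟩
    refine ⟨isCycleEdgeSet_cycleEdges (c k) (hinj k), ?_⟩
    rintro _ ⟨i, rfl⟩
    exact hadj k i
  · induction e with
    | h a b =>
      refine ⟨_, ⟨⟨label a b, rfl⟩, hcover a b he⟩, ?_⟩
      rintro _ ⟨⟨k, rfl⟩, hk⟩
      rw [label_eq_of_mem_cycleEdges hlabel hk]

theorem orthogonalDecompositions_range_of_label [NeZero n] {n' : ℕ} [NeZero n']
    (c : ι → Fin n → V) (c' : κ → Fin n' → V) (label' : V → V → κ)
    (hlabel' : ∀ k i, label' (c' k i) (c' k (i + 1)) = k ∧ label' (c' k (i + 1)) (c' k i) = k)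
    (hsep : ∀ k, Injective fun i => label' (c k i) (c k (i + 1))) :
    OrthogonalDecompositions (Set.range fun k => cycleEdges (c k))
      (Set.range fun k => cycleEdges (c' k)) := by
  rintro _ ⟨k, rfl⟩ _ ⟨l, rfl⟩ _ ⟨⟨i, rfl⟩, hi⟩ _ ⟨⟨j, rfl⟩, hj⟩
  obtain rfl : i = j := hsep k <|
    (label_eq_of_mem_cycleEdges hlabel' hi).trans (label_eq_of_mem_cycleEdges hlabel' hj).symm
  rfl

end CycleEdges

abbrev K999 : SimpleGraph (Fin 27) :=
  SimpleGraph.fromRel fun x y : Fin 27 => (x : ℕ) / 9 ≠ (y : ℕ) / 9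

namespace K999

def part (a : Fin 27) : Fin 3 := ⟨a / 9, by omega⟩

def index (a : Fin 27) : Fin 9 := ⟨a % 9, by omega⟩

def vertex (p : Fin 3) (x : Fin 9) : Fin 27 := ⟨9 * p + x, by omega⟩

theorem adj_iff {a b : Fin 27} : K999.Adj a b ↔ part a ≠ part b := by
  simp only [fromRel_adj, part, ne_eq, Fin.mk.injEq]
  constructor
  · rintro ⟨-, h | h⟩ <;> omega
  · intro h
    exact ⟨fun hab => h (hab ▸ rfl), Or.inl h⟩

def translateCycle {r : ℕ} (base : Fin r → Fin 9 → Fin 9) (m : ℕ) (k : Fin r × Fin m)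
    (i : Fin 9) : Fin 27 :=
  vertex (Fin.ofNat 3 i) (base k.1 i + Fin.ofNat 9 k.2)

/-- Read from its end in part `τ` to its end in part `τ + 1`, an edge has type `τ`, start `x` and
difference `δ` (indices in `ℤ/9`). -/
def edgeType (a b : Fin 27) : Fin 3 × Fin 9 × Fin 9 :=
  if part b = part a + 1 then (part a, index a, index b - index a)
  else (part b, index b, index a - index b)

/-- Translation preserves type and difference, so the cycle through an edge is found by
locating its type and difference on a base cycle. -/
def translateLabel {r : ℕ} [NeZero r] (base : Fin r → Fin 9 → Fin 9) (m : ℕ) [NeZero m]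
    (a b : Fin 27) : Fin r × Fin m :=
  let (τ, x, δ) := edgeType a b
  let (j, i) := ((List.finRange r ×ˢ List.finRange 9).find? fun (j, i) =>
    Fin.ofNat 3 i = τ ∧ base j (i + 1) - base j i = δ).getD (0, 0)
  (j, Fin.ofNat m (x - base j i : Fin 9))

theorem isCycleDecomposition_translates {r : ℕ} [NeZero r] (base : Fin r → Fin 9 → Fin 9)
    (m : ℕ) [NeZero m] (hinj : ∀ k, Injective (translateCycle base m k))
    (hpart : ∀ k i, part (translateCycle base m k i) ≠ part (translateCycle base m k (i + 1)))
    (hlabel : ∀ k i,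
      translateLabel base m (translateCycle base m k i) (translateCycle base m k (i + 1)) = k ∧
      translateLabel base m (translateCycle base m k (i + 1)) (translateCycle base m k i) = k)
    (hcover : ∀ a b, part a ≠ part b → ∃ i,
      s(translateCycle base m (translateLabel base m a b) i,
        translateCycle base m (translateLabel base m a b) (i + 1)) = s(a, b)) :
    IsCycleDecomposition K999 9 (Set.range fun k => cycleEdges (translateCycle base m k)) :=
  isCycleDecomposition_range_of_label _ _ hinj (fun k i => adj_iff.mpr (hpart k i)) hlabel
    fun a b h => hcover a b (adj_iff.mp h)

/-- The cycle `a₀ b_d c_{2d} a₃ b_{3+d} c_{3+2d} a₆ b_{6+d} c_{6+2d}`, fixed by translation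
by `3`. -/
def base₁ (d : Fin 9) (i : Fin 9) : Fin 9 := 3 * (i / 3) + i % 3 * d

def base₂ : Fin 3 → Fin 9 → Fin 9 :=
  ![![0, 7, 8, 8, 0, 2, 4, 3, 6], ![0, 3, 8, 3, 5, 5, 2, 6, 4], ![0, 5, 4, 3, 3, 0, 1, 7, 2]]

end K999

/-- `K_{9,9,9}`: the complete tripartite graph on 27 vertices, the parts being the
blocks of 9 consecutive vertices (vertices adjacent iff in distinct parts). -/
theorem orthogonal_nine_cycle_decompositions_K999 :
    ∃ D₁ D₂ : Set (Set (Sym2 (Fin 27))),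
      IsCycleDecomposition (SimpleGraph.fromRel (fun x y : Fin 27 => (x : ℕ) / 9 ≠ (y : ℕ) / 9)) 9 D₁ ∧
      IsCycleDecomposition (SimpleGraph.fromRel (fun x y : Fin 27 => (x : ℕ) / 9 ≠ (y : ℕ) / 9)) 9 D₂ ∧
      OrthogonalDecompositions D₁ D₂ := by
  open K999 in
  refine ⟨_, _, isCycleDecomposition_translates base₁ 3 ?_ ?_ ?_ ?_,
    isCycleDecomposition_translates base₂ 9 ?_ ?_ ?_ ?_,
    orthogonalDecompositions_range_of_label _ _ (translateLabel base₂ 9) ?_ ?_⟩ <;>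
  decide +kernel
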